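/- Monotonicity of the backward-sweep current update in ℓ (key step in the proof of Proposition 1). With (P, Q, ν) regarded as functions of the line-current vector ℓ via the closed-form DistFlow identities, define f_ij(ℓ) = (P_ij(ℓ)² + Q_ij(ℓ)²) / ν_i(ℓ) for each edge (i,j) ∈ E. Suppose ℓ^u, ℓ^l ∈ ℝ^E with ℓ^u_kl > ℓ^l_kl ≥ 0 for every edge (k,l), that all LinDistFlow flows are nonnegative (P̂ ≥ 0, Q̂ ≥ 0, as holds under NRPF), and that ν_i(ℓ^u) > 0 for every node i. Then for every pair of edges (i,j) and (k,l): ∂f_ij/∂ℓ_kl evaluated at ℓ^u is at least its value evaluated at ℓ^l, with strict inequality whenever (k,l) ∈ E_j ∪ {(i,j)} or 𝒫_i ∩ 𝒫_l ≠ ∅. -/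

import Mathlib

/-!
Through the closed-form DistFlow identities, `P_ij`, `Q_ij` and `ν_i` are affine in `ℓ`. The flows
have the nonnegative coefficients `R_kl`, `X_kl` on `E_j ∪ {(i,j)}`; the voltage has the
coefficients `R_kl² + X_kl² − 2 (R̂_il R_kl + X̂_il X_kl)`, which are nonpositive because
`R̂_il ≥ R_kl` and `X̂_il ≥ X_kl` whenever `(k,l) ∈ 𝒫_i`. Hence
`∂f_ij/∂ℓ_kl = (2 P a + 2 Q b)/ν − (P² + Q²) c/ν²` with constant slopes `a, b ≥ 0 ≥ c`. This is
nondecreasing in `P, Q ≥ 0` and nonincreasing in `ν > 0`, and from `ℓ^l` to `ℓ^u` the flows grow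
while the voltage drops. The increase is strict when `a = R_kl > 0`, i.e. `(k,l) ∈ E_j ∪ {(i,j)}`,
and when `c < 0`, which holds as soon as `𝒫_i ∩ 𝒫_l ≠ ∅`.
-/

open Finset

/-- `b` is the parent of `a` in the child-labelled rooted tree described by `par`
(`par a = none` means that the parent of `a` is the substation node `0`). -/
def IsParent {V : Type*} (par : V → Option V) (a b : V) : Prop := par a = some b

/-- `b` is a weak ancestor of `a` : `b` lies on the path from the substation to `a`
(including `a` itself).  Equivalently `a ∈ T_b`, and the edge entering `b`
belongs to the root-path `𝒫_a`. -/
def Anc {V : Type*} (par : V → Option V) (a b : V) : Prop :=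
  Relation.ReflTransGen (IsParent par) a b

/-- Acyclicity of the parent map, so that it describes a genuine (finite, radial) tree. -/
def Acyclic {V : Type*} (par : V → Option V) : Prop :=
  ∀ v, ¬ Relation.TransGen (IsParent par) v v

open Classical in
/-- Sum of `f` over the subtree `T_j` rooted at `j` (equivalently, identifying each edge
with its child node, over the edges `E_j ∪ {(i,j)}`). -/
noncomputable def subtreeSum {V : Type*} [Fintype V] (par : V → Option V)
    (f : V → ℝ) (j : V) : ℝ :=
  ∑ k, if Anc par k j then f k else 0

open Classical in
/-- Common-path sum `R̂_{jk} = Σ_{e ∈ 𝒫_j ∩ 𝒫_k} R_e`. -/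
noncomputable def commonSum {V : Type*} [Fintype V] (par : V → Option V)
    (R : V → ℝ) (j k : V) : ℝ :=
  ∑ e, if Anc par j e ∧ Anc par k e then R e else 0

open Classical in
/-- Sum of `f` over the edges of the root path `𝒫_j`. -/
noncomputable def pathSum {V : Type*} [Fintype V] (par : V → Option V)
    (f : V → ℝ) (j : V) : ℝ :=
  ∑ e, if Anc par j e then f e else 0

open Classical in
/-- The children of `j`, as a finset. -/
noncomputable def childrenOf {V : Type*} [Fintype V] (par : V → Option V) (j : V) : Finset V :=
  Finset.univ.filter (fun k => par k = some j)

/-- LinDistFlow voltage `ν̂_j`, in closed form. -/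
noncomputable def lpfVolt {V : Type*} [Fintype V] (par : V → Option V) (R X : V → ℝ)
    (pt qt : V → ℝ) (ν0 : ℝ) (j : V) : ℝ :=
  ν0 - 2 * ∑ k, (commonSum par R j k * pt k + commonSum par X j k * qt k)

/-- The LinDistFlow (LPF) equations for flows `P, Q` and squared voltages `ν`,
with substation squared voltage `ν0`. -/
def IsLPF {V : Type*} [Fintype V] (par : V → Option V) (R X : V → ℝ) (pt qt : V → ℝ)
    (ν0 : ℝ) (P Q ν : V → ℝ) : Prop :=
  (∀ j, P j = (∑ k ∈ childrenOf par j, P k) + pt j) ∧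
  (∀ j, Q j = (∑ k ∈ childrenOf par j, Q k) + qt j) ∧
  (∀ j, ν j = (par j).elim ν0 ν - 2 * (R j * P j + X j * Q j))

/-- Nonlinear DistFlow line flow, as a function of the vector `ℓ` of squared line
currents (closed-form identity): `P_ij(ℓ) = P̂_ij + Σ_{(k,l)∈E_j∪{(i,j)}} R_kl ℓ_kl`.
(The reactive flow `Q_ij(ℓ)` is obtained by instantiating `R := X`, `pt := qt`.) -/
noncomputable def npfFlowCur {V : Type*} [Fintype V] (par : V → Option V)
    (R pt : V → ℝ) (ℓ : V → ℝ) (j : V) : ℝ :=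
  subtreeSum par pt j + subtreeSum par (fun e => R e * ℓ e) j

/-- Nonlinear DistFlow squared voltage, as a function of the vector `ℓ` of squared line
currents (closed-form identity):
`ν_j(ℓ) = ν̂_j − 2Σ_{(k,l)∈E}(R̂_jl R_kl + X̂_jl X_kl) ℓ_kl + Σ_{(k,l)∈𝒫_j}(R_kl²+X_kl²) ℓ_kl`. -/
noncomputable def npfVoltCur {V : Type*} [Fintype V] (par : V → Option V)
    (R X pt qt : V → ℝ) (ν0 : ℝ) (ℓ : V → ℝ) (j : V) : ℝ :=
  lpfVolt par R X pt qt ν0 j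
    - 2 * (∑ e, (commonSum par R j e * R e + commonSum par X j e * X e) * ℓ e)
    + pathSum par (fun e => (R e ^ 2 + X e ^ 2) * ℓ e) j

/-- The backward-sweep current update `f_ij(ℓ) = (P_ij(ℓ)² + Q_ij(ℓ)²)/ν_i(ℓ)`,
where `i` is the parent endpoint of the edge `(i,j)` (`ν_i = ν0` if `i` is the
substation), and `P, Q, ν` are regarded as functions of `ℓ` via the closed-form
DistFlow identities. -/
noncomputable def sweepRatio {V : Type*} [Fintype V] (par : V → Option V)
    (R X pt qt : V → ℝ) (ν0 : ℝ) (ℓ : V → ℝ) (j : V) : ℝ :=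
  (npfFlowCur par R pt ℓ j ^ 2 + npfFlowCur par X qt ℓ j ^ 2) /
    (par j).elim ν0 (npfVoltCur par R X pt qt ν0 ℓ)

noncomputable def sumSqDivDeriv (P Q D a b c : ℝ) : ℝ :=
  (2 * P * a + 2 * Q * b) / D - (P ^ 2 + Q ^ 2) * c / D ^ 2

section SumSqDivDeriv

variable {P Q D P' Q' D' a b c : ℝ}

lemma sumSqDivDeriv_eq (P Q D a b c : ℝ) :
    sumSqDivDeriv P Q D a b c = (2 * P * a + 2 * Q * b) / D + (P ^ 2 + Q ^ 2) * (-c) / D ^ 2 := by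
  rw [sumSqDivDeriv, mul_neg, neg_div, sub_eq_add_neg]

lemma sumSqDivDeriv_le (ha : 0 ≤ a) (hb : 0 ≤ b) (hc : c ≤ 0) (hP : 0 ≤ P) (hPP' : P ≤ P')
    (hQ : 0 ≤ Q) (hQQ' : Q ≤ Q') (hD' : 0 < D') (hD'D : D' ≤ D) :
    sumSqDivDeriv P Q D a b c ≤ sumSqDivDeriv P' Q' D' a b c := by
  rw [sumSqDivDeriv_eq, sumSqDivDeriv_eq]
  have hP' : 0 ≤ P' := hP.trans hPP'
  have hQ' : 0 ≤ Q' := hQ.trans hQQ'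
  have hc' : 0 ≤ -c := neg_nonneg.2 hc
  gcongr

lemma sumSqDivDeriv_lt_of_lt_left (ha : 0 < a) (hb : 0 ≤ b) (hc : c ≤ 0) (hP : 0 ≤ P)
    (hPP' : P < P') (hQ : 0 ≤ Q) (hQQ' : Q ≤ Q') (hD' : 0 < D') (hD'D : D' ≤ D) :
    sumSqDivDeriv P Q D a b c < sumSqDivDeriv P' Q' D' a b c := by
  rw [sumSqDivDeriv_eq, sumSqDivDeriv_eq]
  have hP' : 0 ≤ P' := hP.trans hPP'.le
  have hQ' : 0 ≤ Q' := hQ.trans hQQ'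
  have hc' : 0 ≤ -c := neg_nonneg.2 hc
  have h1 : (2 * P * a + 2 * Q * b) / D < (2 * P' * a + 2 * Q' * b) / D' :=
    calc (2 * P * a + 2 * Q * b) / D ≤ (2 * P * a + 2 * Q * b) / D' := by gcongr
      _ < (2 * P' * a + 2 * Q' * b) / D' := by gcongr ?_ / _; nlinarith
  have h2 : (P ^ 2 + Q ^ 2) * (-c) / D ^ 2 ≤ (P' ^ 2 + Q' ^ 2) * (-c) / D' ^ 2 := by gcongr
  linarith

lemma sumSqDivDeriv_lt_of_lt_denom (ha : 0 ≤ a) (hb : 0 ≤ b) (hc : c < 0) (hP : 0 ≤ P)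
    (hPP' : P ≤ P') (hP' : 0 < P') (hQ : 0 ≤ Q) (hQQ' : Q ≤ Q') (hD' : 0 < D') (hD'D : D' < D) :
    sumSqDivDeriv P Q D a b c < sumSqDivDeriv P' Q' D' a b c := by
  rw [sumSqDivDeriv_eq, sumSqDivDeriv_eq]
  have hQ' : 0 ≤ Q' := hQ.trans hQQ'
  have hc' : 0 < -c := neg_pos.2 hc
  have h1 : (2 * P * a + 2 * Q * b) / D ≤ (2 * P' * a + 2 * Q' * b) / D' := by gcongr
  have h2 : (P ^ 2 + Q ^ 2) * (-c) / D ^ 2 < (P' ^ 2 + Q' ^ 2) * (-c) / D' ^ 2 := by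
    calc (P ^ 2 + Q ^ 2) * (-c) / D ^ 2 ≤ (P' ^ 2 + Q' ^ 2) * (-c) / D ^ 2 := by gcongr
      _ < (P' ^ 2 + Q' ^ 2) * (-c) / D' ^ 2 := by gcongr
  linarith

end SumSqDivDeriv

lemma fderiv_sq_add_sq_div_apply {E : Type*} [NormedAddCommGroup E] [NormedSpace ℝ E]
    {p q d : E → ℝ} {p' q' d' : E →L[ℝ] ℝ} {x : E} (hp : HasFDerivAt p p' x)
    (hq : HasFDerivAt q q' x) (hd : HasFDerivAt d d' x) (hx : d x ≠ 0) (v : E) :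
    fderiv ℝ (fun y => (p y ^ 2 + q y ^ 2) / d y) x v
      = sumSqDivDeriv (p x) (q x) (d x) (p' v) (q' v) (d' v) := by
  have h : HasFDerivAt (fun y => (p y ^ 2 + q y ^ 2) * (d y)⁻¹) _ x :=
    ((hp.pow 2).add (hq.pow 2)).mul ((hasDerivAt_inv hx).comp_hasFDerivAt x hd)
  simp only [div_eq_mul_inv]
  rw [h.fderiv]
  simp only [Pi.add_apply, neg_smul, smul_neg, Nat.add_one_sub_one, pow_one, nsmul_eq_mul,
    Nat.cast_ofNat, smul_add, add_apply, neg_apply, smul_apply, smul_eq_mul, sumSqDivDeriv]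
  field_simp
  ring

lemma hasFDerivAt_const_add_dotProduct {V : Type*} [Fintype V] (c : ℝ) (w x : V → ℝ) :
    HasFDerivAt (fun ℓ => c + w ⬝ᵥ ℓ)
      (∑ k, w k • ContinuousLinearMap.proj (R := ℝ) (φ := fun _ : V => ℝ) k) x :=
  (HasFDerivAt.fun_sum fun k _ => (hasFDerivAt_apply k x).const_mul (w k)).const_add c

section DotProduct

variable {n R : Type*} [Fintype n] [Ring R] [PartialOrder R] [IsStrictOrderedRing R]

lemma dotProduct_lt_dotProduct_of_nonneg_left {u v w : n → R} (huv : u ≤ v) (hw : 0 ≤ w) {i : n}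
    (hi : u i < v i) (hwi : 0 < w i) : w ⬝ᵥ u < w ⬝ᵥ v :=
  Finset.sum_lt_sum (fun k _ => mul_le_mul_of_nonneg_left (huv k) (hw k))
    ⟨i, Finset.mem_univ i, mul_lt_mul_of_pos_left hi hwi⟩

lemma dotProduct_le_dotProduct_of_nonpos_left {u v w : n → R} (huv : u ≤ v) (hw : w ≤ 0) :
    w ⬝ᵥ v ≤ w ⬝ᵥ u := by
  have h := dotProduct_le_dotProduct_of_nonneg_left huv (neg_nonneg.2 hw)
  rwa [neg_dotProduct, neg_dotProduct, neg_le_neg_iff] at h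

lemma dotProduct_lt_dotProduct_of_neg_left {u v w : n → R} (huv : u ≤ v) (hw : w ≤ 0) {i : n}
    (hi : u i < v i) (hwi : w i < 0) : w ⬝ᵥ v < w ⬝ᵥ u := by
  have h := dotProduct_lt_dotProduct_of_nonneg_left huv (neg_nonneg.2 hw) hi (neg_pos.2 hwi)
  rwa [neg_dotProduct, neg_dotProduct, neg_lt_neg_iff] at h

end DotProduct

section Affine

variable {V : Type*} [Fintype V]

noncomputable def affineSumSqDiv (A B C : ℝ) (wP wQ cD ℓ : V → ℝ) : ℝ :=
  ((A + wP ⬝ᵥ ℓ) ^ 2 + (B + wQ ⬝ᵥ ℓ) ^ 2) / (C + cD ⬝ᵥ ℓ)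

variable [DecidableEq V] {A B C : ℝ} {wP wQ cD ℓl ℓu : V → ℝ}

lemma fderiv_affineSumSqDiv_single {x : V → ℝ} (hx : C + cD ⬝ᵥ x ≠ 0) (e : V) :
    fderiv ℝ (affineSumSqDiv A B C wP wQ cD) x (Pi.single e 1)
      = sumSqDivDeriv (A + wP ⬝ᵥ x) (B + wQ ⬝ᵥ x) (C + cD ⬝ᵥ x) (wP e) (wQ e) (cD e) := by
  unfold affineSumSqDiv
  rw [fderiv_sq_add_sq_div_apply (hasFDerivAt_const_add_dotProduct A wP x)
    (hasFDerivAt_const_add_dotProduct B wQ x) (hasFDerivAt_const_add_dotProduct C cD x) hx]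
  simp [Pi.single_apply]

lemma fderiv_affineSumSqDiv_single_le (hwP : 0 ≤ wP) (hwQ : 0 ≤ wQ) (hcD : cD ≤ 0)
    (hA : 0 ≤ A) (hB : 0 ≤ B) (hℓl : 0 ≤ ℓl) (hle : ℓl ≤ ℓu) (hD : 0 < C + cD ⬝ᵥ ℓu) (e : V) :
    fderiv ℝ (affineSumSqDiv A B C wP wQ cD) ℓl (Pi.single e 1)
      ≤ fderiv ℝ (affineSumSqDiv A B C wP wQ cD) ℓu (Pi.single e 1) := by
  have hDle := add_le_add_right (dotProduct_le_dotProduct_of_nonpos_left hle hcD) C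
  rw [fderiv_affineSumSqDiv_single (hD.trans_le hDle).ne', fderiv_affineSumSqDiv_single hD.ne']
  exact sumSqDivDeriv_le (hwP e) (hwQ e) (hcD e)
    (add_nonneg hA (dotProduct_nonneg_of_nonneg hwP hℓl))
    (add_le_add_right (dotProduct_le_dotProduct_of_nonneg_left hle hwP) A)
    (add_nonneg hB (dotProduct_nonneg_of_nonneg hwQ hℓl))
    (add_le_add_right (dotProduct_le_dotProduct_of_nonneg_left hle hwQ) B) hD hDle

lemma fderiv_affineSumSqDiv_single_lt_of_pos (hwP : 0 ≤ wP) (hwQ : 0 ≤ wQ) (hcD : cD ≤ 0)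
    (hA : 0 ≤ A) (hB : 0 ≤ B) (hℓl : 0 ≤ ℓl) (hle : ℓl ≤ ℓu) (hD : 0 < C + cD ⬝ᵥ ℓu) {e : V}
    (hwPe : 0 < wP e) (he : ℓl e < ℓu e) :
    fderiv ℝ (affineSumSqDiv A B C wP wQ cD) ℓl (Pi.single e 1)
      < fderiv ℝ (affineSumSqDiv A B C wP wQ cD) ℓu (Pi.single e 1) := by
  have hDle := add_le_add_right (dotProduct_le_dotProduct_of_nonpos_left hle hcD) C
  rw [fderiv_affineSumSqDiv_single (hD.trans_le hDle).ne', fderiv_affineSumSqDiv_single hD.ne']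
  exact sumSqDivDeriv_lt_of_lt_left hwPe (hwQ e) (hcD e)
    (add_nonneg hA (dotProduct_nonneg_of_nonneg hwP hℓl))
    (add_lt_add_right (dotProduct_lt_dotProduct_of_nonneg_left hle hwP he hwPe) A)
    (add_nonneg hB (dotProduct_nonneg_of_nonneg hwQ hℓl))
    (add_le_add_right (dotProduct_le_dotProduct_of_nonneg_left hle hwQ) B) hD hDle

lemma fderiv_affineSumSqDiv_single_lt_of_neg (hwP : 0 ≤ wP) (hwQ : 0 ≤ wQ) (hcD : cD ≤ 0)
    (hA : 0 ≤ A) (hB : 0 ≤ B) (hℓl : 0 ≤ ℓl) (hle : ℓl ≤ ℓu) (hD : 0 < C + cD ⬝ᵥ ℓu) {e m : V}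
    (hcDe : cD e < 0) (he : ℓl e < ℓu e) (hwPm : 0 < wP m) (hm : ℓl m < ℓu m) :
    fderiv ℝ (affineSumSqDiv A B C wP wQ cD) ℓl (Pi.single e 1)
      < fderiv ℝ (affineSumSqDiv A B C wP wQ cD) ℓu (Pi.single e 1) := by
  have hDlt := add_lt_add_right (dotProduct_lt_dotProduct_of_neg_left hle hcD he hcDe) C
  have hPl : 0 ≤ A + wP ⬝ᵥ ℓl := add_nonneg hA (dotProduct_nonneg_of_nonneg hwP hℓl)
  have hPlt := add_lt_add_right (dotProduct_lt_dotProduct_of_nonneg_left hle hwP hm hwPm) A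
  rw [fderiv_affineSumSqDiv_single (hD.trans hDlt).ne', fderiv_affineSumSqDiv_single hD.ne']
  exact sumSqDivDeriv_lt_of_lt_denom (hwP e) (hwQ e) hcDe hPl hPlt.le (hPl.trans_lt hPlt)
    (add_nonneg hB (dotProduct_nonneg_of_nonneg hwQ hℓl))
    (add_le_add_right (dotProduct_le_dotProduct_of_nonneg_left hle hwQ) B) hD hDlt

end Affine

section Tree

variable {V : Type*} {par : V → Option V}

open Classical in
noncomputable def flowWeight (par : V → Option V) (R : V → ℝ) (j k : V) : ℝ :=
  if Anc par k j then R k else 0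

lemma flowWeight_nonneg {R : V → ℝ} (hR : 0 ≤ R) (j : V) : 0 ≤ flowWeight par R j := fun k => by
  unfold flowWeight
  split_ifs
  exacts [hR k, le_rfl]

lemma flowWeight_pos {R : V → ℝ} {j e : V} (hR : 0 < R e) (h : Anc par e j) :
    0 < flowWeight par R j e := by
  rwa [flowWeight, if_pos h]

variable [Fintype V]

open Classical in
noncomputable def voltWeight (par : V → Option V) (R X : V → ℝ) (i k : V) : ℝ :=
  (if Anc par i k then R k ^ 2 + X k ^ 2 else 0)
    - 2 * (commonSum par R i k * R k + commonSum par X i k * X k)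

lemma npfFlowCur_eq (par : V → Option V) (R pt ℓ : V → ℝ) (j : V) :
    npfFlowCur par R pt ℓ j = subtreeSum par pt j + flowWeight par R j ⬝ᵥ ℓ := by
  simp only [npfFlowCur, subtreeSum, flowWeight, dotProduct, ite_mul, zero_mul]

lemma npfVoltCur_eq (par : V → Option V) (R X pt qt : V → ℝ) (ν0 : ℝ) (ℓ : V → ℝ) (i : V) :
    npfVoltCur par R X pt qt ν0 ℓ i = lpfVolt par R X pt qt ν0 i + voltWeight par R X i ⬝ᵥ ℓ := by
  simp only [npfVoltCur, pathSum, voltWeight, dotProduct, sub_mul, ite_mul, zero_mul,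
    Finset.sum_sub_distrib, Finset.mul_sum, mul_assoc]
  ring

lemma parentVolt_eq (par : V → Option V) (R X pt qt : V → ℝ) (ν0 : ℝ) (ℓ : V → ℝ) (j : V) :
    (par j).elim ν0 (npfVoltCur par R X pt qt ν0 ℓ)
      = (par j).elim ν0 (lpfVolt par R X pt qt ν0) + (par j).elim 0 (voltWeight par R X) ⬝ᵥ ℓ := by
  cases par j <;> simp [npfVoltCur_eq]

lemma sweepRatio_eq_affineSumSqDiv (par : V → Option V) (R X pt qt : V → ℝ) (ν0 : ℝ) (j : V) :
    (fun ℓ => sweepRatio par R X pt qt ν0 ℓ j)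
      = affineSumSqDiv (subtreeSum par pt j) (subtreeSum par qt j)
          ((par j).elim ν0 (lpfVolt par R X pt qt ν0)) (flowWeight par R j) (flowWeight par X j)
          ((par j).elim 0 (voltWeight par R X)) := by
  funext ℓ
  rw [sweepRatio, affineSumSqDiv, npfFlowCur_eq, npfFlowCur_eq, parentVolt_eq]

lemma commonSum_nonneg {R : V → ℝ} (hR : 0 ≤ R) (i k : V) : 0 ≤ commonSum par R i k :=
  Finset.sum_nonneg fun f _ => by
    split_ifs
    exacts [hR f, le_rfl]

lemma le_commonSum {R : V → ℝ} (hR : 0 ≤ R) {i k f : V} (hi : Anc par i f) (hk : Anc par k f) :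
    R f ≤ commonSum par R i k := by
  classical
  calc R f = if Anc par i f ∧ Anc par k f then R f else 0 := by rw [if_pos ⟨hi, hk⟩]
    _ ≤ commonSum par R i k := by
      unfold commonSum
      convert Finset.single_le_sum (f := fun f => if Anc par i f ∧ Anc par k f then R f else 0)
        (fun f _ => by split_ifs; exacts [hR f, le_rfl]) (Finset.mem_univ f)

lemma voltWeight_nonpos {R X : V → ℝ} (hR : 0 ≤ R) (hX : 0 ≤ X) (i : V) :
    voltWeight par R X i ≤ 0 := fun k => by
  have hcR := commonSum_nonneg (par := par) hR i k
  have hcX := commonSum_nonneg (par := par) hX i k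
  rw [Pi.zero_apply, voltWeight]
  split_ifs with h
  · have hRk := le_commonSum hR h .refl
    have hXk := le_commonSum hX h .refl
    nlinarith [mul_le_mul_of_nonneg_right hRk (hR k), mul_le_mul_of_nonneg_right hXk (hX k)]
  · nlinarith [mul_nonneg hcR (hR k), mul_nonneg hcX (hX k)]

lemma voltWeight_neg {R X : V → ℝ} (hR : ∀ e, 0 < R e) (hX : 0 ≤ X) {i e f : V}
    (hi : Anc par i f) (he : Anc par e f) : voltWeight par R X i e < 0 := by
  have hRf := le_commonSum (fun k => (hR k).le) hi he
  have hcX := commonSum_nonneg (par := par) hX i e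
  unfold voltWeight
  split_ifs with h
  · have hRe := le_commonSum (fun k => (hR k).le) h .refl
    have hXe := le_commonSum hX h .refl
    nlinarith [mul_le_mul_of_nonneg_right hRe (hR e).le, mul_le_mul_of_nonneg_right hXe (hX e),
      mul_pos (hR e) (hR e)]
  · nlinarith [mul_le_mul_of_nonneg_right hRf (hR e).le, mul_pos (hR f) (hR e),
      mul_nonneg hcX (hX e)]

end Tree

theorem sweep_ratio_derivative_monotone_general {V : Type*} [Fintype V] [DecidableEq V]
    (par : V → Option V)
    (R X : V → ℝ) (hR : ∀ e, 0 < R e) (hX : ∀ e, 0 < X e)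
    (pt qt : V → ℝ) (ν0 : ℝ) (hν0 : 0 < ν0)
    (ℓu ℓl : V → ℝ) (hℓ : ∀ e, 0 ≤ ℓl e ∧ ℓl e < ℓu e)
    (hPhat : ∀ j, 0 ≤ subtreeSum par pt j) (hQhat : ∀ j, 0 ≤ subtreeSum par qt j)
    (hν : ∀ i, 0 < npfVoltCur par R X pt qt ν0 ℓu i) :
    ∀ j e : V,
      (fderiv ℝ (fun l => sweepRatio par R X pt qt ν0 l j) ℓl) (Pi.single e 1)
        ≤ (fderiv ℝ (fun l => sweepRatio par R X pt qt ν0 l j) ℓu) (Pi.single e 1) ∧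
      ((Anc par e j ∨ ∃ i f, par j = some i ∧ Anc par i f ∧ Anc par e f) →
        (fderiv ℝ (fun l => sweepRatio par R X pt qt ν0 l j) ℓl) (Pi.single e 1)
          < (fderiv ℝ (fun l => sweepRatio par R X pt qt ν0 l j) ℓu) (Pi.single e 1)) := by
  intro j e
  have hR0 : 0 ≤ R := fun k => (hR k).le
  have hX0 : 0 ≤ X := fun k => (hX k).le
  have hℓl : 0 ≤ ℓl := fun k => (hℓ k).1
  have hle : ℓl ≤ ℓu := fun k => (hℓ k).2.le
  have hcD : (par j).elim 0 (voltWeight par R X) ≤ 0 := by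
    cases par j
    exacts [le_rfl, voltWeight_nonpos hR0 hX0 _]
  have hD : 0 < (par j).elim ν0 (lpfVolt par R X pt qt ν0)
      + (par j).elim 0 (voltWeight par R X) ⬝ᵥ ℓu := by
    rw [← parentVolt_eq]
    cases par j
    exacts [hν0, hν _]
  have hwP := flowWeight_nonneg (par := par) hR0 j
  have hwQ := flowWeight_nonneg (par := par) hX0 j
  rw [sweepRatio_eq_affineSumSqDiv]
  refine ⟨fderiv_affineSumSqDiv_single_le hwP hwQ hcD (hPhat j) (hQhat j) hℓl hle hD e, ?_⟩
  rintro (hej | ⟨i, f, hji, hif, hef⟩)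
  · exact fderiv_affineSumSqDiv_single_lt_of_pos hwP hwQ hcD (hPhat j) (hQhat j) hℓl hle hD
      (flowWeight_pos (hR e) hej) (hℓ e).2
  · refine fderiv_affineSumSqDiv_single_lt_of_neg hwP hwQ hcD (hPhat j) (hQhat j) hℓl hle hD
      ?_ (hℓ e).2 (flowWeight_pos (hR j) .refl) (hℓ j).2
    rw [hji]
    exact voltWeight_neg hR hX0 hif hef

/-- **Monotonicity of the backward-sweep current update in `ℓ`** (key step in the proof of
Proposition 1).  Suppose `ℓ^u, ℓ^l ∈ ℝ^E` with `ℓ^u_kl > ℓ^l_kl ≥ 0` on every edge, all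
LinDistFlow flows are nonnegative (as holds under NRPF), and `ν_i(ℓ^u) > 0` at every node
(with `ν0 > 0`).  Then for every pair of edges `(i,j)` and `(k,l)` the partial derivative
`∂f_ij/∂ℓ_kl` evaluated at `ℓ^u` is at least its value at `ℓ^l`, with strict inequality
whenever `(k,l) ∈ E_j ∪ {(i,j)}` or `𝒫_i ∩ 𝒫_l ≠ ∅`. -/
theorem sweep_ratio_derivative_monotone {V : Type*} [Fintype V] [DecidableEq V]
    (par : V → Option V) (hacyc : Acyclic par)
    (R X : V → ℝ) (hR : ∀ e, 0 < R e) (hX : ∀ e, 0 < X e)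
    (pt qt : V → ℝ) (ν0 : ℝ) (hν0 : 0 < ν0)
    (ℓu ℓl : V → ℝ) (hℓ : ∀ e, 0 ≤ ℓl e ∧ ℓl e < ℓu e)
    (hPhat : ∀ j, 0 ≤ subtreeSum par pt j) (hQhat : ∀ j, 0 ≤ subtreeSum par qt j)
    (hν : ∀ i, 0 < npfVoltCur par R X pt qt ν0 ℓu i) :
    ∀ j e : V,
      (fderiv ℝ (fun l => sweepRatio par R X pt qt ν0 l j) ℓl) (Pi.single e 1)
        ≤ (fderiv ℝ (fun l => sweepRatio par R X pt qt ν0 l j) ℓu) (Pi.single e 1) ∧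
      ((Anc par e j ∨ ∃ i f, par j = some i ∧ Anc par i f ∧ Anc par e f) →
        (fderiv ℝ (fun l => sweepRatio par R X pt qt ν0 l j) ℓl) (Pi.single e 1)
          < (fderiv ℝ (fun l => sweepRatio par R X pt qt ν0 l j) ℓu) (Pi.single e 1)) :=
  sweep_ratio_derivative_monotone_general par R X hR hX pt qt ν0 hν0 ℓu ℓl hℓ hPhat hQhat hν
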